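/- arXiv:0806.2075 — 5 statements merged into one kernel-verified Lean document; each statement's English description precedes it below -/
import Mathlib

section
/- For n×n positive semidefinite complex matrices A₁,…,A_k, the span of all Hadamard products (A₁x₁)∘⋯∘(A_kx_k) over x₁,…,x_k ∈ ℂⁿ equals the range of the Hadamard product A₁∘⋯∘A_k. -/
/-!
Write each `Aₗ = Bₗ Bₗᴴ`. Expanding the products of sums shows that the Hadamard product
`A₁ ∘ ⋯ ∘ A_k` is again a Gram matrix `D Dᴴ`, where the row `i` of `D` is the tensor product of
the rows `i` of the `Bₗ`, and that `(A₁x₁) ∘ ⋯ ∘ (A_kx_k) = D w` for the tensor `w` of the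
vectors `Bₗᴴxₗ`. Hence every generator lies in `range D = range (D Dᴴ)`. Conversely, the columns
of `A₁ ∘ ⋯ ∘ A_k` are generators, obtained from `x₁ = ⋯ = x_k = eⱼ`.
-/

open Matrix
open scoped ComplexOrder
open Finset

namespace Matrix

variable {ι m n κ R 𝕜 : Type*} [Fintype ι]

def faceSplittingProd [CommMonoid R] (B : ι → Matrix m κ R) : Matrix m (ι → κ) R :=
  of fun i p => ∏ l, B l i (p l)

theorem range_mulVecLin_le_span_prod_mulVec [Fintype n] [DecidableEq n] [CommSemiring R]
    (A : ι → Matrix m n R) :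
    LinearMap.range (of fun i j => ∏ l, A l i j).mulVecLin
      ≤ Submodule.span R {v | ∃ x : ι → n → R, v = fun i => ∏ l, (A l *ᵥ x l) i} := by
  rw [range_mulVecLin, Submodule.span_le]
  rintro _ ⟨j, rfl⟩
  exact Submodule.subset_span ⟨fun _ => Pi.single j 1, by ext; simp⟩

variable [DecidableEq ι] [Fintype κ]

theorem prod_mulVec_apply [CommSemiring R] (B : ι → Matrix m κ R) (y : ι → κ → R) (i : m) :
    ∏ l, (B l *ᵥ y l) i = (faceSplittingProd B *ᵥ fun p => ∏ l, y l (p l)) i := by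
  simp only [mulVec, dotProduct, prod_univ_sum, Fintype.piFinset_univ, faceSplittingProd,
    of_apply, prod_mul_distrib]

theorem of_prod_mul_conjTranspose [CommSemiring R] [StarRing R] (B : ι → Matrix m κ R) :
    (of fun i j => ∏ l, (B l * (B l)ᴴ) i j) = faceSplittingProd B * (faceSplittingProd B)ᴴ := by
  ext i j
  simp only [of_apply, mul_apply, conjTranspose_apply, prod_univ_sum, Fintype.piFinset_univ,
    faceSplittingProd, prod_mul_distrib, star_prod]

theorem mem_range_mulVecLin_iff_toLp_mem [Fintype n] [DecidableEq n] [RCLike 𝕜]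
    (M : Matrix m n 𝕜) (v : m → 𝕜) :
    v ∈ LinearMap.range M.mulVecLin ↔ WithLp.toLp 2 v ∈ LinearMap.range M.toEuclideanLin :=
  ⟨fun ⟨x, hx⟩ => ⟨WithLp.toLp 2 x, congrArg (WithLp.toLp 2) hx⟩,
    fun ⟨x, hx⟩ => ⟨x.ofLp, congrArg WithLp.ofLp hx⟩⟩

theorem range_mulVecLin_mul_conjTranspose [Fintype m] [DecidableEq m] [DecidableEq κ] [RCLike 𝕜]
    (D : Matrix m κ 𝕜) :
    LinearMap.range (D * Dᴴ).mulVecLin = LinearMap.range D.mulVecLin := by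
  ext v
  rw [mem_range_mulVecLin_iff_toLp_mem, mem_range_mulVecLin_iff_toLp_mem, toLpLin_mul_same,
    toEuclideanLin_conjTranspose_eq_adjoint, LinearMap.range_self_comp_adjoint]

theorem span_prod_mulVec_le_range [Fintype m] [DecidableEq m] [DecidableEq κ] [RCLike 𝕜]
    (B : ι → Matrix m κ 𝕜) :
    Submodule.span 𝕜 {v | ∃ x : ι → m → 𝕜, v = fun i => ∏ l, ((B l * (B l)ᴴ) *ᵥ x l) i}
      ≤ LinearMap.range (of fun i j => ∏ l, (B l * (B l)ᴴ) i j).mulVecLin := by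
  rw [Submodule.span_le, of_prod_mul_conjTranspose, range_mulVecLin_mul_conjTranspose]
  rintro _ ⟨x, rfl⟩
  refine ⟨fun p => ∏ l, ((B l)ᴴ *ᵥ x l) (p l), funext fun i => ?_⟩
  simp only [mulVecLin_apply, ← prod_mulVec_apply, mulVec_mulVec]

end Matrix

open scoped MatrixOrder in
theorem Matrix.PosSemidef.exists_eq_mul_conjTranspose {n 𝕜 : Type*} [Fintype n] [DecidableEq n]
    [RCLike 𝕜] {A : Matrix n n 𝕜} (hA : A.PosSemidef) : ∃ B : Matrix n n 𝕜, A = B * Bᴴ :=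
  CStarAlgebra.nonneg_iff_eq_mul_star_self.mp hA.nonneg

/-- For n×n positive semidefinite complex matrices A₁,…,A_k, the span of all Hadamard
products (A₁x₁)∘⋯∘(A_kx_k) over x₁,…,x_k ∈ ℂⁿ equals the range of A₁∘⋯∘A_k. -/
theorem stmt1 (n k : ℕ) (A : Fin k → Matrix (Fin n) (Fin n) ℂ)
    (hA : ∀ m, (A m).PosSemidef) :
    Submodule.span ℂ
      {v : Fin n → ℂ | ∃ x : Fin k → (Fin n → ℂ),
        v = fun i => ∏ m, (A m).mulVec (x m) i}
    = LinearMap.range (Matrix.mulVecLin (Matrix.of fun i j => ∏ m, A m i j)) := by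
  choose B hB using fun l => (hA l).exists_eq_mul_conjTranspose
  obtain rfl : A = fun l => B l * (B l)ᴴ := funext hB
  exact le_antisymm (span_prod_mulVec_le_range B) (range_mulVecLin_le_span_prod_mulVec _)
end

section
/- For n×n positive semidefinite complex matrices A₁,…,A_k, the span of the products (A₁x)∘⋯∘(A_kx) over a single vector x ∈ ℂⁿ equals the range of A₁∘⋯∘A_k. -/
/-!
Write each `Aₘ = Bₘ Bₘᴴ`. The Hadamard product of the `Aₘ` is then the Gram matrix `K Kᴴ` of
the matrix `K` whose `i`-th row is the tensor product of the `i`-th rows of the `Bₘ`, and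
`(A₁x)∘⋯∘(Aₖx) = K y` where `y` is the tensor product of the vectors `Bₘᴴx`. So every such vector
lies in `range K = range (K Kᴴ)`. Conversely, taking `x = eⱼ` gives the `j`-th column of the
Hadamard product.
-/

open Matrix
open scoped ComplexOrder

namespace Matrix

variable {ι n p R : Type*}

def rowKronecker [Fintype ι] [CommMonoid R] (C : ι → Matrix n p R) : Matrix n (ι → p) R :=
  of fun i q => ∏ m, C m i (q m)

lemma prod_mulVec_apply_eq_rowKronecker_mulVec [Fintype ι] [DecidableEq ι] [Fintype p]
    [CommSemiring R] (C : ι → Matrix n p R) (y : ι → p → R) :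
    (fun i => ∏ m, (C m *ᵥ y m) i) = rowKronecker C *ᵥ fun q => ∏ m, y m (q m) := by
  ext i
  simp only [mulVec, dotProduct, rowKronecker, of_apply, Finset.prod_univ_sum,
    Fintype.piFinset_univ, Finset.prod_mul_distrib]

lemma hadamardProd_mul_conjTranspose [Fintype ι] [DecidableEq ι] [Fintype p] [CommSemiring R]
    [StarRing R] (B : ι → Matrix n p R) :
    (of fun i j => ∏ m, (B m * (B m)ᴴ) i j) = rowKronecker B * (rowKronecker B)ᴴ := by
  ext i j
  have := congrFun (prod_mulVec_apply_eq_rowKronecker_mulVec B fun m q => star (B m j q)) i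
  simpa [mul_apply, mulVec, dotProduct, rowKronecker, star_prod] using this

lemma range_mulVecLin_mul_conjTranspose_s2 [Fintype n] [Fintype p] [Field R] [PartialOrder R]
    [StarRing R] [StarOrderedRing R] (K : Matrix n p R) :
    LinearMap.range (K * Kᴴ).mulVecLin = LinearMap.range K.mulVecLin :=
  Submodule.eq_of_le_of_finrank_eq (by rw [mulVecLin_mul]; exact LinearMap.range_comp_le_range _ _)
    (rank_self_mul_conjTranspose K)

lemma range_hadamardProd_le_span [Fintype ι] [Fintype n] [DecidableEq n] [CommSemiring R]
    (A : ι → Matrix n n R) :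
    LinearMap.range (of fun i j => ∏ m, A m i j).mulVecLin ≤
      Submodule.span R {v | ∃ x, v = fun i => ∏ m, (A m *ᵥ x) i} := by
  rw [range_mulVecLin, Submodule.span_le]
  rintro _ ⟨j, rfl⟩
  exact Submodule.subset_span ⟨Pi.single j 1, by ext i; simp⟩

end Matrix

/-- For n×n positive semidefinite complex matrices A₁,…,A_k, the span of the products
(A₁x)∘⋯∘(A_kx) over a single vector x ∈ ℂⁿ equals the range of A₁∘⋯∘A_k. -/
theorem stmt2 (n k : ℕ) (A : Fin k → Matrix (Fin n) (Fin n) ℂ)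
    (hA : ∀ m, (A m).PosSemidef) :
    Submodule.span ℂ
      {v : Fin n → ℂ | ∃ x : Fin n → ℂ, v = fun i => ∏ m, (A m).mulVec x i}
    = LinearMap.range (Matrix.mulVecLin (Matrix.of fun i j => ∏ m, A m i j)) := by
  open scoped MatrixOrder in
  obtain ⟨B, rfl⟩ : ∃ B : Fin k → Matrix (Fin n) (Fin n) ℂ, A = fun m => B m * (B m)ᴴ := by
    choose B hB using fun m => CStarAlgebra.nonneg_iff_eq_mul_star_self.mp (hA m).nonneg
    exact ⟨B, funext hB⟩
  refine le_antisymm ?_ (range_hadamardProd_le_span _)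
  rw [Submodule.span_le, hadamardProd_mul_conjTranspose, range_mulVecLin_mul_conjTranspose_s2]
  rintro _ ⟨x, rfl⟩
  simp_rw [← mulVec_mulVec]
  exact ⟨_, (prod_mulVec_apply_eq_rowKronecker_mulVec B _).symm⟩
end

section
/- For any n×n complex matrices B₁,…,B_k, the vector (B₁x₁)∘⋯∘(B_kx_k) lies in the range of (B₁B₁*)∘⋯∘(B_kB_k*) for all x₁,…,x_k ∈ ℂⁿ. -/
/-!
Let `C` be the matrix whose `i`-th row is the tensor product of the `i`-th rows of the `B m`,
with columns indexed by tuples `p : Fin k → Fin n`. Expanding the product of sums shows that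
`(B₁B₁*)∘⋯∘(B_kB_k*) = C C*` and `(B₁x₁)∘⋯∘(B_kx_k) = C (x₁⊗⋯⊗x_k)`. Since `C C*` and `C` have
the same rank and `range (C C*) ⊆ range C`, the two ranges coincide.
-/

open Matrix

namespace Matrix

variable {ι κ ν R : Type*}

theorem range_mulVecLin_self_mul_conjTranspose [Fintype ι] [Fintype ν] [Field R] [PartialOrder R]
    [StarRing R] [StarOrderedRing R] (A : Matrix ι ν R) :
    LinearMap.range (A * Aᴴ).mulVecLin = LinearMap.range A.mulVecLin := by
  apply Submodule.eq_of_le_of_finrank_eq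
  · rintro _ ⟨y, rfl⟩
    exact ⟨Aᴴ *ᵥ y, by simp [mulVec_mulVec]⟩
  · exact rank_self_mul_conjTranspose A

def rowTensor [CommMonoid R] [Fintype κ] (B : κ → Matrix ι ν R) : Matrix ι (κ → ν) R :=
  of fun i p => ∏ m, B m i (p m)

variable [Fintype κ] [DecidableEq κ] [Fintype ν]

theorem rowTensor_mulVec [CommSemiring R] (B : κ → Matrix ι ν R) (x : κ → ν → R) :
    rowTensor B *ᵥ (fun p => ∏ m, x m (p m)) = fun i => ∏ m, (B m *ᵥ x m) i := by
  ext i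
  simp only [mulVec, dotProduct, rowTensor, of_apply, Fintype.prod_sum, Finset.prod_mul_distrib]

theorem rowTensor_mul_conjTranspose [CommSemiring R] [StarRing R] (B : κ → Matrix ι ν R) :
    rowTensor B * (rowTensor B)ᴴ = of fun i j => ∏ m, (B m * (B m)ᴴ) i j := by
  ext i j
  simp only [mul_apply, conjTranspose_apply, rowTensor, of_apply, Fintype.prod_sum, star_prod,
    Finset.prod_mul_distrib]

end Matrix

/-- For any n×n complex matrices B₁,…,B_k, the vector (B₁x₁)∘⋯∘(B_kx_k) lies in the
range of (B₁B₁*)∘⋯∘(B_kB_k*) for all x₁,…,x_k ∈ ℂⁿ. -/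
theorem stmt3 (n k : ℕ) (B : Fin k → Matrix (Fin n) (Fin n) ℂ)
    (x : Fin k → (Fin n → ℂ)) :
    (fun i => ∏ m, (B m).mulVec (x m) i) ∈
      LinearMap.range
        (Matrix.mulVecLin (Matrix.of fun i j => ∏ m, (B m * (B m)ᴴ) i j)) := by
  open ComplexOrder in
  rw [← rowTensor_mul_conjTranspose, range_mulVecLin_self_mul_conjTranspose,
    ← rowTensor_mulVec B x]
  exact LinearMap.mem_range_self _ _
end

section
/- Let B₁,…,B_k be n×n complex matrices and let E be the orthogonal projection onto the orthogonal complement of range((B₁B₁*)∘⋯∘(B_kB_k*)). Then the element Σ_{i=1}^n (B₁*e_i)⊗⋯⊗(B_k*e_i)⊗(conj(E)e_i) of the (k+1)-fold tensor product (ℂⁿ)^{⊗(k+1)} is zero. -/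
/-!
The Hadamard product of the Gram matrices `B t * (B t)ᴴ` is `C * Cᴴ`, where `C` is the
face-splitting product of the `B t`: its row `i` is the Kronecker product of the rows `i` of the
`B t`. Since `E` is hermitian and its range is orthogonal to the range of `C * Cᴴ`, we get
`E * C * Cᴴ = 0`, hence `E * C = 0`. The coordinates of the tensor in the product of the standard
bases are exactly the conjugates of the entries of `E * C`.
-/

open Matrix
open scoped ComplexOrder

theorem LinearMap.IsSymmetric.comp_eq_zero_of_range_le_orthogonal {𝕜 E F : Type*} [RCLike 𝕜]
    [NormedAddCommGroup E] [InnerProductSpace 𝕜 E] [AddCommGroup F] [Module 𝕜 F]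
    {T : E →ₗ[𝕜] E} {S : F →ₗ[𝕜] E} (hT : T.IsSymmetric)
    (h : LinearMap.range T ≤ (LinearMap.range S)ᗮ) : T ∘ₗ S = 0 := by
  ext1 y
  refine ext_inner_left 𝕜 fun x => ?_
  rw [LinearMap.comp_apply, ← hT, LinearMap.zero_apply, inner_zero_right]
  exact Submodule.inner_left_of_mem_orthogonal (LinearMap.mem_range_self S y)
    (h (LinearMap.mem_range_self T x))

namespace Matrix

theorem IsHermitian.mul_eq_zero_of_range_le_orthogonal {𝕜 n p : Type*} [RCLike 𝕜]
    [Fintype n] [DecidableEq n] [Fintype p] [DecidableEq p] {E : Matrix n n 𝕜}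
    {A : Matrix n p 𝕜} (hE : E.IsHermitian)
    (h : LinearMap.range (toEuclideanLin E) ≤ (LinearMap.range (toEuclideanLin A))ᗮ) :
    E * A = 0 := by
  apply toEuclideanLin.injective
  rw [toLpLin_mul_same, map_zero]
  exact (isSymmetric_toEuclideanLin_iff.mpr hE).comp_eq_zero_of_range_le_orthogonal h

def faceSplitting {ι m n R : Type*} [Fintype ι] [CommMonoid R] (B : ι → Matrix m n R) :
    Matrix m (ι → n) R :=
  of fun i s => ∏ t, B t i (s t)

theorem of_prod_mul_conjTranspose_eq_faceSplitting {ι m n R : Type*} [Fintype ι] [DecidableEq ι]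
    [Fintype n] [CommSemiring R] [StarRing R] (B : ι → Matrix m n R) :
    (of fun i j => ∏ t, (B t * (B t)ᴴ) i j) = faceSplitting B * (faceSplitting B)ᴴ := by
  ext i j
  simp only [of_apply, mul_apply, conjTranspose_apply, faceSplitting, star_prod,
    ← Finset.prod_mul_distrib, Fintype.prod_sum]

end Matrix

theorem stmt5_general (n k : ℕ) (B : Fin k → Matrix (Fin n) (Fin n) ℂ)
    (E : Matrix (Fin n) (Fin n) ℂ) (hE1 : Eᴴ = E)
    (hE3 : LinearMap.range
        (Matrix.toEuclideanLin E)
      = (LinearMap.range (Matrix.toEuclideanLin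
          (Matrix.of fun i j => ∏ m, (B m * (B m)ᴴ) i j)))ᗮ) :
    (∑ i : Fin n,
      PiTensorProduct.tprod ℂ
        (Fin.snoc (fun m : Fin k => (B m)ᴴ.mulVec (Pi.single i 1))
          ((E.map (starRingEnd ℂ)).mulVec (Pi.single i 1))
          : Fin (k + 1) → (Fin n → ℂ)))
    = 0 := by
  have hEC : E * faceSplitting B = 0 := by
    rw [← mul_self_mul_conjTranspose_eq_zero, ← of_prod_mul_conjTranspose_eq_faceSplitting]
    exact IsHermitian.mul_eq_zero_of_range_le_orthogonal hE1 hE3.le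
  refine (Basis.piTensorProduct fun _ => Pi.basisFun ℂ (Fin n)).ext_elem fun d => ?_
  have hcoeff := congr_fun₂ hEC (d (Fin.last k)) (Fin.init d)
  simp only [mul_apply, faceSplitting, of_apply, Matrix.zero_apply] at hcoeff
  simp only [map_sum, Finsupp.coe_finsetSum, Finset.sum_apply,
    Basis.piTensorProduct_repr_tprod_apply, Pi.basisFun_repr, Fin.prod_univ_castSucc,
    Fin.snoc_castSucc, Fin.snoc_last, mulVec_single_one, col_apply, conjTranspose_apply,
    map_apply, map_zero, Finsupp.coe_zero, Pi.zero_apply]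
  rw [← star_zero, ← hcoeff, star_sum]
  simp only [starRingEnd_apply, star_mul', star_prod, Fin.init, mul_comm]

/-- Let B₁,…,B_k be n×n complex matrices and let E be the orthogonal projection onto
the orthogonal complement of range((B₁B₁*)∘⋯∘(B_kB_k*)). Then
Σ_{i=1}^n (B₁*e_i)⊗⋯⊗(B_k*e_i)⊗(conj(E)e_i) = 0 in (ℂⁿ)^{⊗(k+1)}. -/
theorem stmt5 (n k : ℕ) (B : Fin k → Matrix (Fin n) (Fin n) ℂ)
    (E : Matrix (Fin n) (Fin n) ℂ) (hE1 : Eᴴ = E) (hE2 : E * E = E)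
    (hE3 : LinearMap.range
        (Matrix.toEuclideanLin E)
      = (LinearMap.range (Matrix.toEuclideanLin
          (Matrix.of fun i j => ∏ m, (B m * (B m)ᴴ) i j)))ᗮ) :
    (∑ i : Fin n,
      PiTensorProduct.tprod ℂ
        (Fin.snoc (fun m : Fin k => (B m)ᴴ.mulVec (Pi.single i 1))
          ((E.map (starRingEnd ℂ)).mulVec (Pi.single i 1))
          : Fin (k + 1) → (Fin n → ℂ)))
    = 0 :=
  stmt5_general n k B E hE1 hE3
end

section
/- Let B₁,…,B_k be n×n complex matrices and E an n×n complex matrix with E* = E² = E. Then the squared norm of Σ_{i=1}^n (B₁*e_i)⊗⋯⊗(B_k*e_i)⊗(conj(E)e_i) in the inner product space (ℂⁿ)^{⊗(k+1)} equals trace(E·((B₁B₁*)∘⋯∘(B_kB_k*))). -/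
/-!
Expanding the squared norm of `∑ᵢ vᵢ₀ ⊗ ⋯ ⊗ vᵢₖ` gives `∑ᵢ,ⱼ ∏ₘ ⟨vᵢₘ, vⱼₘ⟩`. The column
`Bᴴ eᵢ` is the conjugated `i`-th row of `B`, so `⟨Bᴴ eᵢ, Bᴴ eⱼ⟩ = (B Bᴴ) j i`; the last
factor is the case `B = Eᵀ`, where `E = Eᴴ = E²` turns `(Eᵀ Eᵀᴴ) j i = (Eᴴ E) i j` into
`E i j`. Summing `E i j · ∏ₘ (Bₘ Bₘᴴ) j i` over `i, j` is the trace of `E (B₁B₁ᴴ ∘ ⋯ ∘ BₖBₖᴴ)`.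
-/

open Matrix

theorem sum_sum_prod_mul_star_sum_prod {R ι α β : Type*} [CommSemiring R] [StarRing R]
    [Fintype ι] [DecidableEq ι] [Fintype α] [Fintype β] (v : β → ι → α → R) :
    ∑ g : ι → α, (∑ i, ∏ m, v i m (g m)) * star (∑ j, ∏ m, v j m (g m))
      = ∑ i, ∑ j, ∏ m, ∑ x, v i m x * star (v j m x) := by
  calc ∑ g : ι → α, (∑ i, ∏ m, v i m (g m)) * star (∑ j, ∏ m, v j m (g m))
      = ∑ g : ι → α, ∑ i, ∑ j, ∏ m, v i m (g m) * star (v j m (g m)) := by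
        simp only [star_sum, star_prod, Finset.sum_mul_sum, Finset.prod_mul_distrib]
    _ = ∑ i, ∑ j, ∑ g : ι → α, ∏ m, v i m (g m) * star (v j m (g m)) := by
        rw [Finset.sum_comm]
        exact Finset.sum_congr rfl fun i _ => Finset.sum_comm
    _ = ∑ i, ∑ j, ∏ m, ∑ x, v i m x * star (v j m x) := by
        simp only [Fintype.prod_sum]

theorem sum_conjTranspose_mulVec_single_mul_star {R l n : Type*} [CommSemiring R] [StarRing R]
    [Fintype l] [Fintype n] [DecidableEq l] (A : Matrix l n R) (i j : l) :
    ∑ x, (Aᴴ *ᵥ Pi.single i 1) x * star ((Aᴴ *ᵥ Pi.single j 1) x) = (A * Aᴴ) j i := by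
  simp only [mulVec_single_one, col_apply, conjTranspose_apply, star_star, mul_apply]
  exact Finset.sum_congr rfl fun x _ => mul_comm _ _

theorem trace_mul_of {R n : Type*} [CommSemiring R] [Fintype n]
    (E : Matrix n n R) (f : n → n → R) :
    (E * Matrix.of f).trace = ∑ i, ∑ j, E i j * f j i := by
  simp only [trace, diag, mul_apply, of_apply]

/-- The (k+1)-fold tensor power of ℂⁿ is realized concretely as functions
(Fin (k+1) → Fin n) → ℂ, a simple tensor u₀⊗⋯⊗u_k being g ↦ ∏ m, u_m (g m), with the induced
inner product ⟨T,S⟩ = Σ_g T g · conj(S g). -/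
theorem stmt6 (n k : ℕ) (B : Fin k → Matrix (Fin n) (Fin n) ℂ)
    (E : Matrix (Fin n) (Fin n) ℂ) (hE1 : Eᴴ = E) (hE2 : E * E = E)
    (T : (Fin (k + 1) → Fin n) → ℂ)
    (hT : T = fun g => ∑ i : Fin n,
      ∏ m : Fin (k + 1),
        (Fin.snoc (fun m' : Fin k => (B m')ᴴ.mulVec (Pi.single i 1))
          ((E.map (starRingEnd ℂ)).mulVec (Pi.single i 1))
          : Fin (k + 1) → (Fin n → ℂ)) m (g m)) :
    (∑ g : Fin (k + 1) → Fin n, T g * star (T g))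
    = (E * Matrix.of fun i j => ∏ m, (B m * (B m)ᴴ) i j).trace := by
  have hconj : E.map (starRingEnd ℂ) = Eᵀᴴ := rfl
  have hlast (i j : Fin n) : (Eᵀ * Eᵀᴴ) j i = E i j := by
    rw [conjTranspose_transpose_eq_transpose_conjTranspose, ← transpose_mul, transpose_apply,
      hE1, hE2]
  subst hT
  rw [sum_sum_prod_mul_star_sum_prod, trace_mul_of, hconj]
  refine Finset.sum_congr rfl fun i _ => Finset.sum_congr rfl fun j _ => ?_
  simp only [Fin.prod_univ_castSucc, Fin.snoc_castSucc, Fin.snoc_last,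
    sum_conjTranspose_mulVec_single_mul_star, hlast, mul_comm]
end
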